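/- arXiv:1902.02931 — 2 statements merged into one kernel-verified Lean document; each statement's English description precedes it below -/
import Mathlib

section
/- Let n ≥ 2 be an integer, m = n − 1, and define d_j = ∑_{r=n−j+1}^{m} M(⌊m/r⌋) for 1 ≤ j ≤ m. Then ∑_{j=1}^{m} d_j ≥ 3m²/π² − (3/2)·m·log m − 2m. -/
open Finset Real

def Mertens (N : ℕ) : ℤ := ∑ i ∈ Finset.Icc 1 N, ArithmeticFunction.moebius i

/-!
Counting the indices `j` for which a given `r` occurs gives `∑ⱼ dⱼ = ∑_{r ≤ m} (r - 1) M(⌊m/r⌋)`,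
and swapping the order of summation in `∑_{r ≤ m} (r - 1) ∑_{i ≤ m/r} μ(i)` turns this into
`∑_{d ≤ m} μ(d) binom(⌊m/d⌋, 2)`. Since `binom(⌊x⌋, 2) = x²/2 + O(x)` with error at most `3x/2`,
the sum is at least `(m²/2) ∑_{d ≤ m} μ(d)/d² - (3m/2) H_m`. Finally
`∑_{d ≤ m} μ(d)/d² ≥ 6/π² - 1/m`, because the full series is `1/ζ(2)` and the tail is dominated
by `∑_{d > m} 1/d² ≤ 1/m`, while `H_m ≤ 1 + log m`.
-/

open Filter Topology ArithmeticFunction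
open scoped ArithmeticFunction.Moebius LSeries.notation

theorem sum_Icc_sum_Icc_eq_sum_pred_nsmul {M : Type*} [AddCommMonoid M] (n : ℕ) (F : ℕ → M) :
    ∑ j ∈ Icc 1 (n - 1), ∑ r ∈ Icc (n - j + 1) (n - 1), F r =
      ∑ r ∈ Icc 1 (n - 1), (r - 1) • F r := by
  rw [sum_comm' (t' := Icc 1 (n - 1)) (s' := fun r => Icc (n + 1 - r) (n - 1))]
  · refine sum_congr rfl fun r hr => ?_
    rw [mem_Icc] at hr
    rw [sum_const, Nat.card_Icc]
    congr 1
    omega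
  · intro j r
    simp only [mem_Icc]
    omega

theorem sum_Icc_mul_sum_Icc_div_comm {R : Type*} [CommSemiring R] (m : ℕ) (f g : ℕ → R) :
    ∑ r ∈ Icc 1 m, f r * ∑ i ∈ Icc 1 (m / r), g i =
      ∑ i ∈ Icc 1 m, g i * ∑ r ∈ Icc 1 (m / i), f r := by
  simp only [mul_sum]
  rw [sum_comm' (t' := Icc 1 m) (s' := fun i => Icc 1 (m / i))]
  · simp only [mul_comm]
  · intro r i
    simp only [mem_Icc]
    constructor
    · rintro ⟨⟨hr, -⟩, hi, hir⟩
      have := (Nat.le_div_iff_mul_le hr).1 hir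
      exact ⟨⟨hr, (Nat.le_div_iff_mul_le hi).2 (by linarith)⟩, hi, by nlinarith⟩
    · rintro ⟨⟨hr, hri⟩, hi, -⟩
      have := (Nat.le_div_iff_mul_le hi).1 hri
      exact ⟨⟨hr, by nlinarith⟩, hi, (Nat.le_div_iff_mul_le hr).2 (by linarith)⟩

theorem sum_Icc_sub_one_eq_choose_two (k : ℕ) : ∑ r ∈ Icc 1 k, (r - 1) = k.choose 2 := by
  induction k with
  | zero => rfl
  | succ k ih =>
    rw [sum_Icc_succ_top (by omega), ih, Nat.choose_succ_succ' k 1, Nat.choose_one_right]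
    simp [add_comm]

theorem hasSum_moebius_div_sq : HasSum (fun d : ℕ => (μ d : ℝ) / d ^ 2) (6 / π ^ 2) := by
  have hs : 1 < (2 : ℂ).re := by norm_num
  have hL : L ↗μ 2 = ((6 / π ^ 2 : ℝ) : ℂ) := by
    have h := LSeries_zeta_mul_Lseries_moebius hs
    rw [LSeries_zeta_eq_riemannZeta hs, riemannZeta_two] at h
    have hπ : (π : ℂ) ≠ 0 := by exact_mod_cast pi_ne_zero
    push_cast
    field_simp
    linear_combination 6 * h
  have h := (LSeriesSummable_moebius_iff.mpr hs).LSeriesHasSum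
  rw [hL] at h
  refine Complex.hasSum_ofReal.mp (h.congr_fun fun d => ?_)
  rcases eq_or_ne d 0 with rfl | hd
  · simp
  · rw [LSeries.term_of_ne_zero hd]
    push_cast
    norm_cast

theorem abs_sub_sum_Icc_le_inv {f : ℕ → ℝ} {a : ℝ} (hf : HasSum f a) (hf0 : f 0 = 0)
    (hbound : ∀ i, |f i| ≤ ((i : ℝ) ^ 2)⁻¹) {m : ℕ} (hm : m ≠ 0) :
    |a - ∑ i ∈ Icc 1 m, f i| ≤ (m : ℝ)⁻¹ := by
  have htend : Tendsto (fun N => ∑ i ∈ Ioc 0 N, f i) atTop (𝓝 a) := by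
    refine ((tendsto_add_atTop_iff_nat 1).2 hf.tendsto_sum_nat).congr fun N => ?_
    rw [Nat.range_succ_eq_Icc_zero, ← sum_Ioc_add_eq_sum_Icc N.zero_le, hf0, add_zero]
  rw [show Icc 1 m = Ioc 0 m from Icc_add_one_left_eq_Ioc 0 m]
  refine le_of_tendsto ((htend.sub_const _).abs) ?_
  filter_upwards [eventually_ge_atTop m] with N hN
  rw [← sum_Ioc_consecutive f m.zero_le hN, add_sub_cancel_left]
  calc |∑ i ∈ Ioc m N, f i| ≤ ∑ i ∈ Ioc m N, ((i : ℝ) ^ 2)⁻¹ :=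
        (abs_sum_le_sum_abs _ _).trans (sum_le_sum fun i _ => hbound i)
    _ ≤ (m : ℝ)⁻¹ - (N : ℝ)⁻¹ := sum_Ioc_inv_sq_le_sub hm hN
    _ ≤ (m : ℝ)⁻¹ := sub_le_self _ (by positivity)

theorem sum_Icc_moebius_div_sq_ge {m : ℕ} (hm : m ≠ 0) :
    6 / π ^ 2 - (m : ℝ)⁻¹ ≤ ∑ d ∈ Icc 1 m, (μ d : ℝ) / d ^ 2 := by
  have hbound (d : ℕ) : |(μ d : ℝ) / d ^ 2| ≤ ((d : ℝ) ^ 2)⁻¹ := by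
    rw [abs_div, abs_of_nonneg (by positivity : (0 : ℝ) ≤ (d : ℝ) ^ 2), div_eq_mul_inv]
    exact mul_le_of_le_one_left (by positivity) (by exact_mod_cast abs_moebius_le_one)
  have h := abs_sub_sum_Icc_le_inv hasSum_moebius_div_sq (by simp) hbound hm
  linarith [(abs_sub_le_iff.1 h).1]

theorem abs_floor_mul_pred_sub_sq_le {x : ℝ} (hx : 0 ≤ x) :
    |(⌊x⌋₊ : ℝ) * (⌊x⌋₊ - 1) / 2 - x ^ 2 / 2| ≤ 3 * x / 2 := by
  have h1 := Nat.floor_le hx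
  have h2 := Nat.lt_floor_add_one x
  have h0 : (0 : ℝ) ≤ ⌊x⌋₊ := Nat.cast_nonneg _
  rw [abs_le]
  constructor <;> nlinarith

theorem moebius_mul_sq_sub_le_moebius_mul_choose_two (m d : ℕ) :
    (μ d : ℝ) * ((m : ℝ) / d) ^ 2 / 2 - 3 * ((m : ℝ) / d) / 2 ≤ μ d * ((m / d).choose 2 : ℕ) := by
  have h := abs_floor_mul_pred_sub_sq_le (by positivity : (0 : ℝ) ≤ m / d)
  rw [Nat.floor_div_eq_div] at h
  have hμ : |(μ d : ℝ)| ≤ 1 := by exact_mod_cast abs_moebius_le_one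
  set x : ℝ := m / d
  set t : ℝ := ((m / d : ℕ) : ℝ) * ((m / d : ℕ) - 1) / 2
  rw [Nat.cast_choose_two]
  calc (μ d : ℝ) * x ^ 2 / 2 - 3 * x / 2 ≤ μ d * x ^ 2 / 2 - |μ d * (t - x ^ 2 / 2)| := by
        rw [abs_mul]
        gcongr
        exact (mul_le_of_le_one_left (abs_nonneg _) hμ).trans h
    _ ≤ μ d * t := by linarith [neg_abs_le (μ d * (t - x ^ 2 / 2))]

theorem sum_moebius_mul_choose_two_ge {m : ℕ} (hm : m ≠ 0) :
    3 * (m : ℝ) ^ 2 / π ^ 2 - 3 / 2 * m * Real.log m - 2 * m ≤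
      ∑ d ∈ Icc 1 m, (μ d : ℝ) * ((m / d).choose 2 : ℕ) := by
  have hH : ∑ d ∈ Icc 1 m, (d : ℝ)⁻¹ ≤ 1 + Real.log m := by
    simpa [harmonic_eq_sum_Icc] using harmonic_le_one_add_log m
  calc 3 * (m : ℝ) ^ 2 / π ^ 2 - 3 / 2 * m * Real.log m - 2 * m
      = (m : ℝ) ^ 2 / 2 * (6 / π ^ 2 - (m : ℝ)⁻¹) - 3 * m / 2 * (1 + Real.log m) := by
        field_simp
        ring
    _ ≤ (m : ℝ) ^ 2 / 2 * ∑ d ∈ Icc 1 m, (μ d : ℝ) / d ^ 2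
          - 3 * m / 2 * ∑ d ∈ Icc 1 m, (d : ℝ)⁻¹ := by
        gcongr
        exact sum_Icc_moebius_div_sq_ge hm
    _ = ∑ d ∈ Icc 1 m, ((μ d : ℝ) * ((m : ℝ) / d) ^ 2 / 2 - 3 * ((m : ℝ) / d) / 2) := by
        rw [mul_sum, mul_sum, ← sum_sub_distrib]
        exact sum_congr rfl fun d _ => by ring
    _ ≤ _ := sum_le_sum fun d _ => moebius_mul_sq_sub_le_moebius_mul_choose_two m d

theorem stmt15 (n : ℕ) (hn : 2 ≤ n) :
    ((∑ j ∈ Icc 1 (n - 1), ∑ r ∈ Icc (n - j + 1) (n - 1), Mertens ((n - 1) / r) : ℤ) : ℝ)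
      ≥ 3 * ((n : ℝ) - 1) ^ 2 / π ^ 2 - (3 / 2) * ((n : ℝ) - 1) * Real.log ((n : ℝ) - 1)
        - 2 * ((n : ℝ) - 1) := by
  rw [sum_Icc_sum_Icc_eq_sum_pred_nsmul]
  obtain ⟨m, rfl⟩ : ∃ m, n = m + 1 := ⟨n - 1, by omega⟩
  rw [Nat.cast_add_one, add_sub_cancel_right, Nat.add_sub_cancel, ge_iff_le]
  calc _ ≤ ∑ d ∈ Icc 1 m, (μ d : ℝ) * ((m / d).choose 2 : ℕ) :=
        sum_moebius_mul_choose_two_ge (by omega)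
    _ = ∑ d ∈ Icc 1 m, (μ d : ℝ) * ∑ r ∈ Icc 1 (m / d), ((r - 1 : ℕ) : ℝ) := by
        simp only [← Nat.cast_sum, sum_Icc_sub_one_eq_choose_two]
    _ = ∑ r ∈ Icc 1 m, ((r - 1 : ℕ) : ℝ) * ∑ i ∈ Icc 1 (m / r), (μ i : ℝ) :=
        (sum_Icc_mul_sum_Icc_div_comm _ _ _).symm
    _ = _ := by push_cast [Mertens, nsmul_eq_mul]; rfl
end

section
/- For every integer n ≥ 95, ∑_{j=1}^{⌊n/2⌋} d_j ≥ (n² − 4n + 3)/8, where d_j = ∑_{r=n−j+1}^{n−1} M(⌊(n−1)/r⌋). -/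
open Finset Real

/-
For `1 ≤ j ≤ n / 2` every `r` with `n - j < r ≤ n - 1` exceeds `(n - 1) / 2`, so `⌊(n - 1) / r⌋ = 1`
and `d_j = (j - 1) M(1) = j - 1`. The sum is then `m (m - 1) / 2` with `m = ⌊n / 2⌋ ≥ (n - 1) / 2`,
which is at least `(n - 1) (n - 3) / 8`.
-/

theorem Mertens_one : Mertens 1 = 1 := by
  simp [Mertens]

theorem sum_Mertens_div_eq_sub_one {n j : ℕ} (hj : 1 ≤ j) (hjn : 2 * j ≤ n) :
    ∑ r ∈ Icc (n - j + 1) (n - 1), Mertens ((n - 1) / r) = (j : ℤ) - 1 := by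
  have hdiv : ∀ r ∈ Icc (n - j + 1) (n - 1), (n - 1) / r = 1 := by
    intro r hr
    rw [mem_Icc] at hr
    exact Nat.div_eq_of_lt_le (by omega) (by omega)
  rw [sum_congr rfl fun r hr => by rw [hdiv r hr, Mertens_one], sum_const, Nat.card_Icc,
    nsmul_one, show n - 1 + 1 - (n - j + 1) = j - 1 by omega, Nat.cast_sub hj, Nat.cast_one]

theorem sum_Icc_sub_one_mul_two (m : ℕ) :
    (∑ j ∈ Icc 1 m, ((j : ℤ) - 1)) * 2 = (m : ℤ) ^ 2 - m := by
  have hshift : ∑ j ∈ Icc 1 m, ((j : ℤ) - 1) = ∑ i ∈ range m, (i : ℤ) := by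
    rw [← Ico_add_one_right_eq_Icc, sum_Ico_eq_sum_range]
    simp
  have hgauss := congrArg (Nat.cast : ℕ → ℤ) (sum_range_id_mul_two m)
  push_cast at hgauss
  rcases m with _ | m
  · simp
  · rw [hshift, hgauss]
    push_cast
    ring

theorem sq_sub_four_mul_add_three_le {n : ℕ} (hn : 2 ≤ n) :
    (n : ℝ) ^ 2 - 4 * n + 3 ≤ 4 * (((n / 2 : ℕ) : ℝ) ^ 2 - (n / 2 : ℕ)) := by
  have hlo : (n : ℝ) ≤ 2 * (n / 2 : ℕ) + 1 := by exact_mod_cast (by omega : n ≤ 2 * (n / 2) + 1)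
  have hn' : (2 : ℝ) ≤ n := by exact_mod_cast hn
  nlinarith

theorem stmt19 (n : ℕ) (hn : 95 ≤ n) :
    ((∑ j ∈ Icc 1 (n / 2), ∑ r ∈ Icc (n - j + 1) (n - 1), Mertens ((n - 1) / r) : ℤ) : ℝ)
      ≥ ((n : ℝ) ^ 2 - 4 * n + 3) / 8 := by
  have hd : ∀ j ∈ Icc 1 (n / 2),
      ∑ r ∈ Icc (n - j + 1) (n - 1), Mertens ((n - 1) / r) = (j : ℤ) - 1 := fun j hj =>
    sum_Mertens_div_eq_sub_one (mem_Icc.1 hj).1 (by have := (mem_Icc.1 hj).2; omega)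
  have hsum : ((∑ j ∈ Icc 1 (n / 2), ((j : ℤ) - 1) : ℤ) : ℝ) * 2
      = ((n / 2 : ℕ) : ℝ) ^ 2 - (n / 2 : ℕ) := by
    exact_mod_cast sum_Icc_sub_one_mul_two (n / 2)
  rw [sum_congr rfl hd, ge_iff_le, div_le_iff₀ (by norm_num)]
  linarith [sq_sub_four_mul_add_three_le (n := n) (by omega)]
end
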